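/- Let G be the group presented with two generators p, γ and the relations p⁹ = 1 and γ⁻¹pγ = p⁴. If Q is any group admitting a surjective homomorphism G → Q and the abelianization of Q has exactly 6 elements, then Q is abelian; consequently Q is cyclic of order 6. -/

import Mathlib

namespace ClassicalZariski.Stmt8

/-- `p` in the free group on the two generators `p, γ`. -/
def p : FreeGroup (Fin 2) := FreeGroup.of 0

/-- `γ` in the free group on the two generators. -/
def g : FreeGroup (Fin 2) := FreeGroup.of 1

/-- The relations `p⁹ = 1` and `γ⁻¹ p γ = p⁴`. -/
def rels : Set (FreeGroup (Fin 2)) :=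
  { p ^ 9, (g⁻¹ * p * g) * (p ^ 4)⁻¹ }

/-- The group `G` presented by generators `p, γ` and relations `p⁹ = 1`, `γ⁻¹ p γ = p⁴`. -/
def G : Type := PresentedGroup rels

instance : Group G := by unfold G; infer_instance

/-! In `G` conjugation by `γ` multiplies `p` by `p³`, and `p³` is central: `γ⁻¹ p³ γ = p¹² = p³`.
A group generated by two elements whose commutator is central has all commutators central, since
modulo the centre the generators commute. This passes to every quotient `Q` of `G`, so `Q ⧸ Z(Q)`
is a quotient of the abelianization, which is cyclic because its order 6 is squarefree. A group
that is cyclic modulo its centre is abelian, so `Q ≅ Qᵃᵇ ≅ ℤ/6`. -/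

open Subgroup
open scoped commutatorElement

section GroupTheory

variable {H : Type*} [Group H]

theorem mem_center_of_forall_commute {S : Set H} (hS : closure S = ⊤) {x : H}
    (hx : ∀ s ∈ S, Commute x s) : x ∈ center H := by
  rw [center_eq_iInf hS]
  simp only [mem_iInf, mem_centralizer_singleton_iff]
  exact fun s hs => (hx s hs).eq

theorem isMulCommutative_of_closure_eq_top {S : Set H} (hS : closure S = ⊤)
    (hcomm : ∀ x ∈ S, ∀ y ∈ S, Commute x y) : IsMulCommutative H := by
  refine center_eq_top_iff.mp (top_le_iff.mp ?_)
  rw [← hS, closure_le]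
  exact fun x hx => mem_center_of_forall_commute hS (hcomm x hx)

theorem commutator_le_center_of_closure_pair_eq_top {a b : H} (hgen : closure {a, b} = ⊤)
    (hab : ⁅a⁻¹, b⁻¹⁆ ∈ center H) : commutator H ≤ center H := by
  rw [← Normal.quotient_commutative_iff_commutator_le]
  set π := QuotientGroup.mk' (center H)
  have hcomm : Commute (π a) (π b) := by
    have : ⁅(π a)⁻¹, (π b)⁻¹⁆ = 1 := by
      rw [← map_inv, ← map_inv, ← map_commutatorElement]
      exact (QuotientGroup.eq_one_iff _).mpr hab
    exact Commute.inv_inv_iff.mp (commutatorElement_eq_one_iff_mul_comm.mp this)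
  refine isMulCommutative_of_closure_eq_top (S := {π a, π b}) ?_ ?_
  · rw [← Set.image_pair, ← MonoidHom.map_closure, hgen, ← MonoidHom.range_eq_map,
      MonoidHom.range_eq_top]
    exact QuotientGroup.mk'_surjective _
  · simp only [Set.mem_insert_iff, Set.mem_singleton_iff, forall_eq_or_imp, forall_eq]
    exact ⟨⟨Commute.refl _, hcomm⟩, hcomm.symm, Commute.refl _⟩

theorem map_center_le_center {K : Type*} [Group K] {f : H →* K} (hf : Function.Surjective f) :
    (center H).map f ≤ center K := by
  rintro _ ⟨x, hx, rfl⟩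
  refine mem_center_iff.mpr fun y => ?_
  obtain ⟨y, rfl⟩ := hf y
  rw [← map_mul, ← map_mul, mem_center_iff.mp hx]

theorem isMulCommutative_of_commutator_le_center [IsCyclic (Abelianization H)]
    (h : commutator H ≤ center H) : IsMulCommutative H := by
  let φ : Abelianization H →* H ⧸ center H := QuotientGroup.map _ _ (MonoidHom.id H) h
  have : IsCyclic (H ⧸ center H) := isCyclic_of_surjective (G' := Abelianization H) φ
    (QuotientGroup.map_surjective_of_surjective _ _ _ QuotientGroup.mk_surjective h)
  exact isMulCommutative_of_isCyclic_quotient_center_self H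

theorem isCyclic_of_squarefree_card {A : Type*} [CommGroup A] (h : Squarefree (Nat.card A)) :
    IsCyclic A := by
  have : Finite A := Nat.finite_of_card_ne_zero fun h0 => not_squarefree_zero (h0 ▸ h)
  have : IsZGroup A := IsZGroup.of_squarefree h
  infer_instance

end GroupTheory

def G.p : G := PresentedGroup.of 0

def G.γ : G := PresentedGroup.of 1

theorem G.closure_p_γ : closure {G.p, G.γ} = ⊤ := by
  refine eq_top_iff.mpr fun x _ => PresentedGroup.generated_by rels _ (fun i => ?_) x
  fin_cases i
  exacts [subset_closure (Set.mem_insert _ _), subset_closure (Set.mem_insert_of_mem _ rfl)]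

theorem G.p_pow_nine : G.p ^ 9 = 1 :=
  PresentedGroup.one_of_mem (Set.mem_insert _ _)

theorem G.conj_p : G.γ⁻¹ * G.p * G.γ = G.p ^ 4 :=
  PresentedGroup.mk_eq_mk_of_mul_inv_mem (Set.mem_insert_of_mem _ rfl)

theorem G.p_pow_three_mem_center : G.p ^ 3 ∈ center G := by
  have hconj : G.γ⁻¹ * G.p ^ 3 * G.γ = G.p ^ 3 :=
    calc G.γ⁻¹ * G.p ^ 3 * G.γ = (G.γ⁻¹ * G.p * G.γ) ^ 3 := by
          simpa using (conj_pow (a := G.γ⁻¹) (b := G.p) (i := 3)).symm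
      _ = G.p ^ 9 * G.p ^ 3 := by rw [G.conj_p, ← pow_mul, ← pow_add]
      _ = G.p ^ 3 := by rw [G.p_pow_nine, one_mul]
  refine mem_center_of_forall_commute G.closure_p_γ ?_
  simp only [Set.mem_insert_iff, Set.mem_singleton_iff, forall_eq_or_imp, forall_eq]
  rw [mul_assoc, inv_mul_eq_iff_eq_mul] at hconj
  exact ⟨Commute.pow_self G.p 3, hconj⟩

theorem G.commutatorElement_p_inv_γ_inv : ⁅G.p⁻¹, G.γ⁻¹⁆ = G.p ^ 3 :=
  calc ⁅G.p⁻¹, G.γ⁻¹⁆ = G.p⁻¹ * (G.γ⁻¹ * G.p * G.γ) := by rw [commutatorElement_def]; group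
    _ = G.p ^ 3 := by rw [G.conj_p]; group

theorem G.commutator_le_center_of_surjective {Q : Type*} [Group Q] {f : G →* Q}
    (hf : Function.Surjective f) : commutator Q ≤ center Q := by
  refine commutator_le_center_of_closure_pair_eq_top (a := f G.p) (b := f G.γ) ?_ ?_
  · rw [← Set.image_pair, ← MonoidHom.map_closure, G.closure_p_γ,
      ← MonoidHom.range_eq_map, MonoidHom.range_eq_top.mpr hf]
  · rw [← map_inv, ← map_inv, ← map_commutatorElement, G.commutatorElement_p_inv_γ_inv]
    exact map_center_le_center hf ⟨_, G.p_pow_three_mem_center, rfl⟩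

theorem quotient_abelian_cyclic_six (Q : Type*) [Group Q]
    (hsurj : ∃ f : G →* Q, Function.Surjective f)
    (hab : Nat.card (Abelianization Q) = 6) :
    (∀ a b : Q, a * b = b * a) ∧ Nonempty (Q ≃* Multiplicative (ZMod 6)) := by
  obtain ⟨f, hf⟩ := hsurj
  have hsix : Squarefree 6 :=
    Nat.squarefree_mul_iff.mpr ⟨by norm_num, Nat.prime_two.squarefree, Nat.prime_three.squarefree⟩
  have : IsCyclic (Abelianization Q) := isCyclic_of_squarefree_card (hab ▸ hsix)
  have : IsMulCommutative Q :=
    isMulCommutative_of_commutator_le_center (G.commutator_le_center_of_surjective hf)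
  open scoped IsMulCommutative in
  exact ⟨mul_comm', ⟨Abelianization.equivOfComm.trans (mulEquivOfCyclicCardEq (by simp [hab]))⟩⟩

end ClassicalZariski.Stmt8
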